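/- arXiv:1402.1900 — 7 statements merged into one kernel-verified Lean document; each statement's English description precedes it below -/
import Mathlib

section
/- Let N = 2 and let R be the additive subgroup of (Fin 4 → ZMod 2) generated by the two rows (1,1,0,0) and (0,0,1,1). Then S(R) = 1, i.e. S(R) = s − 3 for s = 4. (This is the verification that the first family of Table 1, with Galois group Z/2 × Z/2, N = 2 and monodromy data {(1,0),(1,0),(0,1),(0,1)}, generates a Shimura subvariety: dim S(G) = s − 3.) -/
open Finset

/-- `paperD N α = −1 + (1/N)·∑_j val(−α_j)` : the dimension `d(α)` of the eigenspace of
holomorphic differentials with local monodromy data `α` (Proposition 2.2.3). -/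
noncomputable def paperD {s : ℕ} (N : ℕ) (α : Fin s → ZMod N) : ℚ :=
  -1 + (1 / (N : ℚ)) * ∑ j, (((-α j).val : ℚ))

/-- `paperS R` : the dimension of the PEL Shimura subvariety `S(G)` attached to a family of
abelian covers with character data the finite additive subgroup `R` (Lemma 2.2.1):
`S(R) = (1/2)·∑_{α ∈ R, 2α ≠ 0} d(α)d(−α) + (1/2)·∑_{α ∈ R, α ≠ 0, 2α = 0} d(α)(d(α)+1)`. -/
noncomputable def paperS {s N : ℕ} [NeZero N] (R : AddSubgroup (Fin s → ZMod N)) : ℚ :=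
  (1 / 2) * ∑ α ∈ ((R : Set (Fin s → ZMod N)).toFinite.toFinset.filter fun α => 2 • α ≠ 0),
      paperD N α * paperD N (-α)
  + (1 / 2) * ∑ α ∈ ((R : Set (Fin s → ZMod N)).toFinite.toFinset.filter
        fun α => α ≠ 0 ∧ 2 • α = 0),
      paperD N α * (paperD N α + 1)

def rowA : Fin 4 → ZMod 2 := ![1, 1, 0, 0]
def rowB : Fin 4 → ZMod 2 := ![0, 0, 1, 1]

def myR : AddSubgroup (Fin 4 → ZMod 2) where
  carrier := ↑({0, rowA, rowB, rowA + rowB} : Finset (Fin 4 → ZMod 2))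
  zero_mem' := by decide
  add_mem' := by decide
  neg_mem' := by decide

lemma closure_eq : AddSubgroup.closure {(![1, 1, 0, 0] : Fin 4 → ZMod 2), ![0, 0, 1, 1]} = myR := by
  apply le_antisymm
  · rw [AddSubgroup.closure_le]
    intro x hx
    rcases hx with rfl | rfl
    · show (![1,1,0,0] : Fin 4 → ZMod 2) ∈
        (↑({0, rowA, rowB, rowA + rowB} : Finset (Fin 4 → ZMod 2)) : Set _)
      exact Finset.mem_coe.mpr (by decide)
    · show (![0,0,1,1] : Fin 4 → ZMod 2) ∈
        (↑({0, rowA, rowB, rowA + rowB} : Finset (Fin 4 → ZMod 2)) : Set _)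
      exact Finset.mem_coe.mpr (by decide)
  · intro x hx
    have hx' : x ∈ ({0, rowA, rowB, rowA + rowB} : Finset (Fin 4 → ZMod 2)) := hx
    simp only [Finset.mem_insert, Finset.mem_singleton] at hx'
    have hA : rowA ∈ AddSubgroup.closure {(![1, 1, 0, 0] : Fin 4 → ZMod 2), ![0, 0, 1, 1]} :=
      AddSubgroup.subset_closure (by left; rfl)
    have hB : rowB ∈ AddSubgroup.closure {(![1, 1, 0, 0] : Fin 4 → ZMod 2), ![0, 0, 1, 1]} :=
      AddSubgroup.subset_closure (by right; rfl)
    rcases hx' with rfl | rfl | rfl | rfl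
    · exact zero_mem _
    · exact hA
    · exact hB
    · exact add_mem hA hB

/-- Table 1, genus-1 family: `G = ℤ/2 × ℤ/2`, `N = 2`, monodromy data
`{(1,0),(1,0),(0,1),(0,1)}` (rows `(1,1,0,0)` and `(0,0,1,1)`): `S(R) = 1 = s − 3`. -/
theorem table1_genus1 :
    paperS (AddSubgroup.closure {(![1, 1, 0, 0] : Fin 4 → ZMod 2), ![0, 0, 1, 1]}) = 1 := by
  rw [closure_eq]
  have hset : ((myR : Set (Fin 4 → ZMod 2)).toFinite.toFinset)
      = ({0, rowA, rowB, rowA + rowB} : Finset (Fin 4 → ZMod 2)) := by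
    ext x
    simp only [Set.Finite.mem_toFinset]
    rfl
  rw [paperS, hset]
  have h1 : Finset.filter (fun α => 2 • α ≠ 0)
      ({0, rowA, rowB, rowA + rowB} : Finset (Fin 4 → ZMod 2)) = ∅ := by decide
  have h2 : Finset.filter (fun α => α ≠ 0 ∧ 2 • α = 0)
      ({0, rowA, rowB, rowA + rowB} : Finset (Fin 4 → ZMod 2))
      = {rowA, rowB, rowA + rowB} := by decide
  rw [h1, h2]
  have hab : rowA + rowB = ![1,1,1,1] := by decide
  have dA : paperD 2 rowA = 0 := by
    simp only [paperD, Fin.sum_univ_four,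
      show (-(rowA 0)).val = 1 from rfl, show (-(rowA 1)).val = 1 from rfl,
      show (-(rowA 2)).val = 0 from rfl, show (-(rowA 3)).val = 0 from rfl]
    norm_num
  have dB : paperD 2 rowB = 0 := by
    simp only [paperD, Fin.sum_univ_four,
      show (-(rowB 0)).val = 0 from rfl, show (-(rowB 1)).val = 0 from rfl,
      show (-(rowB 2)).val = 1 from rfl, show (-(rowB 3)).val = 1 from rfl]
    norm_num
  have dAB : paperD 2 (rowA + rowB) = 1 := by
    simp only [paperD, Fin.sum_univ_four,
      show (-((rowA + rowB) 0)).val = 1 from rfl, show (-((rowA + rowB) 1)).val = 1 from rfl,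
      show (-((rowA + rowB) 2)).val = 1 from rfl, show (-((rowA + rowB) 3)).val = 1 from rfl]
    norm_num
  rw [Finset.sum_insert (by decide), Finset.sum_insert (by decide), Finset.sum_singleton]
  rw [dA, dB, dAB]
  norm_num
end

section
/- Let N = 2 and let R be the additive subgroup of (Fin 5 → ZMod 2) generated by the two rows (1,1,1,1,0) and (0,0,0,1,1). Then S(R) = 2, i.e. S(R) = s − 3 for s = 5. (This is the verification that the genus-2 family of Table 1, with Galois group Z/2 × Z/2, N = 2 and monodromy data {(1,0),(1,0),(1,0),(1,1),(0,1)}, generates a Shimura subvariety: dim S(G) = s − 3.) -/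
open Finset

/-!
Over `ZMod 2` every vector is `2`-torsion, so `R = {0, a, b, a + b}`, only the second sum of
`S(R)` is present, and `d(α) = wt(α)/2 - 1` with `wt` the Hamming weight. The weights `4, 2, 4`
of `a, b, a + b` give `d = 1, 0, 1`, hence `S(R) = (2 + 0 + 2)/2 = 2`.
-/

lemma zsmul_eq_zero_or_self_of_two_nsmul {G : Type*} [AddCommGroup G] {a : G} (ha : 2 • a = 0)
    (m : ℤ) : m • a = 0 ∨ m • a = a := by
  obtain ⟨k, rfl | rfl⟩ := Int.even_or_odd' m
  · left
    rw [mul_comm, mul_zsmul, two_zsmul, ← two_nsmul, ha, zsmul_zero]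
  · right
    rw [add_zsmul, mul_comm, mul_zsmul, two_zsmul, ← two_nsmul, ha, zsmul_zero, zero_add, one_zsmul]

lemma AddSubgroup.coe_closure_pair_of_two_nsmul {G : Type*} [AddCommGroup G] {a b : G}
    (ha : 2 • a = 0) (hb : 2 • b = 0) :
    (AddSubgroup.closure {a, b} : Set G) = {0, a, b, a + b} := by
  ext x
  simp only [SetLike.mem_coe, AddSubgroup.mem_closure_pair, Set.mem_insert_iff,
    Set.mem_singleton_iff]
  constructor
  · rintro ⟨m, n, rfl⟩
    rcases zsmul_eq_zero_or_self_of_two_nsmul ha m with hm | hm <;>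
      rcases zsmul_eq_zero_or_self_of_two_nsmul hb n with hn | hn <;> simp [hm, hn]
  · rintro (rfl | rfl | rfl | rfl)
    exacts [⟨0, 0, by simp⟩, ⟨1, 0, by simp⟩, ⟨0, 1, by simp⟩, ⟨1, 1, by simp⟩]

lemma paperD_zero {s : ℕ} (N : ℕ) : paperD N (0 : Fin s → ZMod N) = -1 := by
  simp [paperD]

lemma paperD_two {s : ℕ} (α : Fin s → ZMod 2) : paperD 2 α = (hammingNorm α : ℚ) / 2 - 1 := by
  have hval : ∀ x : ZMod 2, ((-x).val : ℚ) = if x ≠ 0 then 1 else 0 := by decide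
  simp only [paperD, hval, Finset.sum_boole, hammingNorm]
  ring

/-- The term at `α = 0` may be included because `d(0) = -1` makes it vanish. -/
lemma paperS_of_two_nsmul_eq_zero {s N : ℕ} [NeZero N] {R : AddSubgroup (Fin s → ZMod N)}
    (hR : ∀ α ∈ R, 2 • α = 0) :
    paperS R = 1 / 2 * ∑ α ∈ (R : Set (Fin s → ZMod N)).toFinite.toFinset,
      paperD N α * (paperD N α + 1) := by
  have hR' : ∀ α ∈ (R : Set (Fin s → ZMod N)).toFinite.toFinset, 2 • α = 0 := by
    simpa using hR
  rw [paperS, Finset.filter_false_of_mem (fun α hα => not_not.2 (hR' α hα)), Finset.sum_empty,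
    Finset.sum_filter_of_ne]
  · ring
  · intro α hα hne
    refine ⟨?_, hR' α hα⟩
    rintro rfl
    simp [paperD_zero] at hne

/-- Table 1, genus-2 family: `G = ℤ/2 × ℤ/2`, `N = 2`, monodromy data
`{(1,0),(1,0),(1,0),(1,1),(0,1)}` (rows `(1,1,1,1,0)` and `(0,0,0,1,1)`): `S(R) = 2 = s − 3`. -/
theorem table1_genus2 :
    paperS (AddSubgroup.closure {(![1, 1, 1, 1, 0] : Fin 5 → ZMod 2), ![0, 0, 0, 1, 1]}) = 2 := by
  set a : Fin 5 → ZMod 2 := ![1, 1, 1, 1, 0]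
  set b : Fin 5 → ZMod 2 := ![0, 0, 0, 1, 1]
  have h2 : ∀ α : Fin 5 → ZMod 2, 2 • α = 0 := CharTwo.two_nsmul
  have hR : (AddSubgroup.closure {a, b} : Set (Fin 5 → ZMod 2)).toFinite.toFinset
      = {0, a, b, a + b} := by
    rw [← Finset.coe_inj, Set.Finite.coe_toFinset,
      AddSubgroup.coe_closure_pair_of_two_nsmul (h2 a) (h2 b)]
    simp
  rw [paperS_of_two_nsmul_eq_zero (fun α _ => h2 α), hR]
  rw [Finset.sum_insert (by decide), Finset.sum_insert (by decide), Finset.sum_pair (by decide)]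
  have ha : hammingNorm a = 4 := by decide
  have hb : hammingNorm b = 2 := by decide
  have hab : hammingNorm (a + b) = 4 := by decide
  simp only [paperD_zero, paperD_two, ha, hb, hab]
  norm_num
end

section
/- Let N = 4 and let R be the additive subgroup of (Fin 4 → ZMod 4) generated by the two rows (2,2,0,0) and (0,1,1,2). Then S(R) = 1, i.e. S(R) = s − 3 for s = 4. (This is the verification that the genus-3 family of Table 1, with Galois group Z/2 × Z/4, N = 4 and monodromy data {(2,0),(2,1),(0,1),(0,2)}, generates a Shimura subvariety: dim S(G) = s − 3.) -/
open Finset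

/-!
Since `2 • (2,2,0,0) = 0` and `4 • (0,1,1,2) = 0`, the group `R` consists of the eight vectors
`m • (2,2,0,0) + n • (0,1,1,2)` with `m < 2`, `n < 4`. Its elements of order 4 are `(0,1,1,2)`,
`(0,3,3,2)`, on which `d` takes the values `1, 0`, and `(2,3,1,2)`, `(2,1,3,2)`, on which `d` is `1`;
the three involutions have two entries `2` and `d = 0`. Hence `S(R) = (0 + 0 + 1 + 1) / 2 = 1`.
-/

theorem zsmul_eq_zsmul_emod {G : Type*} [AddGroup G] {x : G} (m : ℤ) {n : ℕ} (h : n • x = 0) :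
    m • x = (m % n) • x := by
  conv_lhs => rw [← Int.emod_add_mul_ediv m n]
  rw [add_zsmul, mul_comm, mul_zsmul, natCast_zsmul, h, zsmul_zero, add_zero]

namespace AddSubgroup

variable {G : Type*} [AddCommGroup G] {a b : G} {p q : ℕ}

theorem mem_closure_pair_iff_of_nsmul_eq_zero {x : G} (hp : p ≠ 0) (hq : q ≠ 0)
    (ha : p • a = 0) (hb : q • b = 0) :
    x ∈ closure {a, b} ↔ ∃ m < p, ∃ n < q, m • a + n • b = x := by
  rw [mem_closure_pair]
  constructor
  · rintro ⟨m, n, rfl⟩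
    have hm := Int.emod_nonneg m (Int.natCast_ne_zero.mpr hp)
    have hn := Int.emod_nonneg n (Int.natCast_ne_zero.mpr hq)
    refine ⟨(m % p).toNat, ?_, (n % q).toNat, ?_, ?_⟩
    · have := Int.emod_lt_of_pos m (by omega : (0 : ℤ) < p); omega
    · have := Int.emod_lt_of_pos n (by omega : (0 : ℤ) < q); omega
    · rw [zsmul_eq_zsmul_emod m ha, zsmul_eq_zsmul_emod n hb, ← natCast_zsmul, ← natCast_zsmul,
        Int.toNat_of_nonneg hm, Int.toNat_of_nonneg hn]
  · rintro ⟨m, -, n, -, rfl⟩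
    exact ⟨m, n, by simp only [natCast_zsmul]⟩

theorem coe_closure_pair_eq_image [DecidableEq G] (hp : p ≠ 0) (hq : q ≠ 0)
    (ha : p • a = 0) (hb : q • b = 0) :
    (closure {a, b} : Set G) = ((range p ×ˢ range q).image fun mn => mn.1 • a + mn.2 • b) := by
  ext x
  simp [mem_closure_pair_iff_of_nsmul_eq_zero hp hq ha hb, and_assoc]

end AddSubgroup

theorem paperS_eq_of_coe_eq {s N : ℕ} [NeZero N] {R : AddSubgroup (Fin s → ZMod N)}
    {A : Finset (Fin s → ZMod N)} (hA : (R : Set (Fin s → ZMod N)) = A) :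
    paperS R = (1 / 2) * ∑ α ∈ A.filter (fun α => 2 • α ≠ 0), paperD N α * paperD N (-α)
      + (1 / 2) * ∑ α ∈ A.filter (fun α => α ≠ 0 ∧ 2 • α = 0), paperD N α * (paperD N α + 1) := by
  have hfin : (R : Set (Fin s → ZMod N)).toFinite.toFinset = A := by ext; simp [hA]
  rw [paperS, hfin]

/-- Table 1, first genus-3 family: `G = ℤ/2 × ℤ/4`, `N = 4`, monodromy data
`{(2,0),(2,1),(0,1),(0,2)}` (rows `(2,2,0,0)` and `(0,1,1,2)`): `S(R) = 1 = s − 3`. -/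
theorem table1_genus3_first :
    paperS (AddSubgroup.closure {(![2, 2, 0, 0] : Fin 4 → ZMod 4), ![0, 1, 1, 2]}) = 1 := by
  rw [paperS_eq_of_coe_eq (AddSubgroup.coe_closure_pair_eq_image (p := 2) (q := 4) two_ne_zero
    four_ne_zero (by decide) (by decide))]
  have hOrderFour : ((range 2 ×ˢ range 4).image fun mn : ℕ × ℕ =>
      mn.1 • (![2, 2, 0, 0] : Fin 4 → ZMod 4) + mn.2 • ![0, 1, 1, 2]).filter (fun α => 2 • α ≠ 0) =
      {![0, 1, 1, 2], ![0, 3, 3, 2], ![2, 3, 1, 2], ![2, 1, 3, 2]} := by decide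
  have hOrderTwo : ((range 2 ×ˢ range 4).image fun mn : ℕ × ℕ =>
      mn.1 • (![2, 2, 0, 0] : Fin 4 → ZMod 4) + mn.2 • ![0, 1, 1, 2]).filter
        (fun α => α ≠ 0 ∧ 2 • α = 0) = {![2, 2, 0, 0], ![0, 2, 2, 0], ![2, 0, 2, 0]} := by decide
  rw [hOrderFour, hOrderTwo]
  simp (config := { decide := true }) only [sum_insert, mem_insert, mem_singleton, sum_singleton,
    paperD, Fin.sum_univ_four, Matrix.cons_val, Matrix.neg_cons, Matrix.neg_empty]
  reduce_mod_char
  norm_num [ZMod.val_ofNat, ZMod.val_one_eq_one_mod]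
end

section
/- Let N = 4 and let R be the additive subgroup of (Fin 4 → ZMod 4) generated by the two rows (2,2,0,0) and (0,2,1,1). Then S(R) = 1, i.e. S(R) = s − 3 for s = 4. (This is the verification that the second genus-3 family of Table 1, with Galois group Z/2 × Z/4, N = 4 and monodromy data {(2,0),(2,2),(0,1),(0,1)}, generates a Shimura subvariety: dim S(G) = s − 3.) -/
open Finset

set_option maxRecDepth 100000
set_option maxHeartbeats 1000000

def myA : Fin 4 → ZMod 4 := ![2, 2, 0, 0]
def myB : Fin 4 → ZMod 4 := ![0, 2, 1, 1]

def myS : Finset (Fin 4 → ZMod 4) :=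
  {![0,0,0,0], ![2,2,0,0], ![0,2,1,1], ![0,0,2,2], ![0,2,3,3], ![2,0,1,1], ![2,2,2,2], ![2,0,3,3]}

def myH : AddSubgroup (Fin 4 → ZMod 4) where
  carrier := ↑myS
  zero_mem' := by decide
  add_mem' := by decide
  neg_mem' := by decide

theorem closure_eq_s3 : AddSubgroup.closure {myA, myB} = myH := by
  apply le_antisymm
  · rw [AddSubgroup.closure_le]
    intro x hx
    rcases hx with h | h <;> subst h <;> show _ ∈ myS <;> decide
  · intro x hx
    have ha : myA ∈ AddSubgroup.closure {myA, myB} :=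
      AddSubgroup.subset_closure (by simp)
    have hb : myB ∈ AddSubgroup.closure {myA, myB} :=
      AddSubgroup.subset_closure (by simp)
    have hx' : x ∈ myS := hx
    fin_cases hx'
    · exact (show (0 : Fin 4 → ZMod 4) = ![0,0,0,0] by decide) ▸ zero_mem _
    · exact (show myA = ![2,2,0,0] by decide) ▸ ha
    · exact (show myB = ![0,2,1,1] by decide) ▸ hb
    · exact (show (2:ℕ) • myB = ![0,0,2,2] by decide) ▸ nsmul_mem hb 2
    · exact (show (3:ℕ) • myB = ![0,2,3,3] by decide) ▸ nsmul_mem hb 3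
    · exact (show myA + myB = ![2,0,1,1] by decide) ▸ add_mem ha hb
    · exact (show myA + (2:ℕ) • myB = ![2,2,2,2] by decide) ▸ add_mem ha (nsmul_mem hb 2)
    · exact (show myA + (3:ℕ) • myB = ![2,0,3,3] by decide) ▸ add_mem ha (nsmul_mem hb 3)

theorem toFinset_eq :
    ((myH : Set (Fin 4 → ZMod 4)).toFinite.toFinset) = myS := by
  apply Finset.coe_injective
  rw [Set.Finite.coe_toFinset]
  rfl

lemma vneg0 : (-(0 : ZMod 4)).val = 0 := by decide
lemma vneg1 : (-(1 : ZMod 4)).val = 3 := by decide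
lemma vneg2 : (-(2 : ZMod 4)).val = 2 := by decide
lemma vneg3 : (-(3 : ZMod 4)).val = 1 := by decide

lemma paperD_eval (a b c d : ZMod 4) :
    paperD 4 ![a, b, c, d] =
      -1 + (1/4 : ℚ) * (((-a).val : ℚ) + ((-b).val : ℚ) + ((-c).val : ℚ) + ((-d).val : ℚ)) := by
  simp only [paperD, Fin.sum_univ_four, Matrix.cons_val_zero, Matrix.cons_val_one,
    Matrix.head_cons, Matrix.cons_val_two, Matrix.tail_cons, Matrix.cons_val_three]
  norm_num

lemma dB : paperD 4 ![0,2,1,1] = 1 := by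
  rw [paperD_eval]; simp only [vneg0, vneg1, vneg2, vneg3]; norm_num
lemma dB3 : paperD 4 ![0,2,3,3] = 0 := by
  rw [paperD_eval]; simp only [vneg0, vneg1, vneg2, vneg3]; norm_num
lemma dAB : paperD 4 ![2,0,1,1] = 1 := by
  rw [paperD_eval]; simp only [vneg0, vneg1, vneg2, vneg3]; norm_num
lemma dAB3 : paperD 4 ![2,0,3,3] = 0 := by
  rw [paperD_eval]; simp only [vneg0, vneg1, vneg2, vneg3]; norm_num
lemma dA : paperD 4 ![2,2,0,0] = 0 := by
  rw [paperD_eval]; simp only [vneg0, vneg1, vneg2, vneg3]; norm_num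
lemma d2B : paperD 4 ![0,0,2,2] = 0 := by
  rw [paperD_eval]; simp only [vneg0, vneg1, vneg2, vneg3]; norm_num
lemma dA2B : paperD 4 ![2,2,2,2] = 1 := by
  rw [paperD_eval]; simp only [vneg0, vneg1, vneg2, vneg3]; norm_num

lemma negB : -(![0,2,1,1] : Fin 4 → ZMod 4) = ![0,2,3,3] := by decide
lemma negB3 : -(![0,2,3,3] : Fin 4 → ZMod 4) = ![0,2,1,1] := by decide
lemma negAB : -(![2,0,1,1] : Fin 4 → ZMod 4) = ![2,0,3,3] := by decide
lemma negAB3 : -(![2,0,3,3] : Fin 4 → ZMod 4) = ![2,0,1,1] := by decide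

/-- Table 1, second genus-3 family: `G = ℤ/2 × ℤ/4`, `N = 4`, monodromy data
`{(2,0),(2,2),(0,1),(0,1)}` (rows `(2,2,0,0)` and `(0,2,1,1)`): `S(R) = 1 = s − 3`. -/
theorem table1_genus3_second :
    paperS (AddSubgroup.closure {(![2, 2, 0, 0] : Fin 4 → ZMod 4), ![0, 2, 1, 1]}) = 1 := by
  show paperS (AddSubgroup.closure {myA, myB}) = 1
  rw [closure_eq_s3, paperS, toFinset_eq]
  rw [show (myS.filter fun α => 2 • α ≠ 0) =
      ({![0,2,1,1], ![0,2,3,3], ![2,0,1,1], ![2,0,3,3]} : Finset (Fin 4 → ZMod 4)) by decide]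
  rw [show (myS.filter fun α => α ≠ 0 ∧ 2 • α = 0) =
      ({![2,2,0,0], ![0,0,2,2], ![2,2,2,2]} : Finset (Fin 4 → ZMod 4)) by decide]
  rw [Finset.sum_insert (by decide), Finset.sum_insert (by decide),
    Finset.sum_insert (by decide), Finset.sum_singleton,
    Finset.sum_insert (by decide), Finset.sum_insert (by decide), Finset.sum_singleton]
  rw [negB, negB3, negAB, negAB3, dB, dB3, dAB, dAB3, dA, d2B, dA2B]
  norm_num
end

section
/- Let N = 2 and let R be the additive subgroup of (Fin 6 → ZMod 2) generated by the two rows (1,1,1,1,0,0) and (0,0,1,1,1,1). Then S(R) = 3, i.e. S(R) = s − 3 for s = 6. (This is the verification that the third genus-3 family of Table 1, with Galois group Z/2 × Z/2, N = 2 and monodromy data {(1,0),(1,0),(1,1),(1,1),(0,1),(0,1)}, generates a Shimura subvariety: dim S(G) = s − 3.) -/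
open Finset

/-! Over `ZMod 2` every character is `2`-torsion, so only the second sum of `S(R)` survives,
and `d(α) = -1 + wt(α)/2` with `wt` the Hamming weight. The group generated by two distinct
nonzero rows `a`, `b` is `{0, a, b, a + b}`; here all three nonzero elements have weight `4`,
so each contributes `d(d + 1) = 2` and `S(R) = 3 · 2 / 2 = 3`. -/

section TwoTorsion

variable {G : Type*} [AddCommGroup G]

lemma zsmul_eq_zero_or_self_of_two_nsmul_eq_zero {x : G} (hx : 2 • x = 0) (m : ℤ) :
    m • x = 0 ∨ m • x = x := by
  have hsplit : m • x = (m % 2) • x := by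
    conv_lhs => rw [← Int.emod_add_mul_ediv m 2]
    rw [add_zsmul, mul_comm, mul_zsmul, two_zsmul, ← two_nsmul, hx, zsmul_zero, add_zero]
  rcases Int.emod_two_eq_zero_or_one m with h | h <;> simp [hsplit, h]

lemma AddSubgroup.coe_closure_pair_of_two_nsmul_eq_zero (h2 : ∀ x : G, 2 • x = 0) (a b : G) :
    (AddSubgroup.closure {a, b} : Set G) = {0, a, b, a + b} := by
  ext z
  simp only [SetLike.mem_coe, AddSubgroup.mem_closure_pair, Set.mem_insert_iff,
    Set.mem_singleton_iff]
  constructor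
  · rintro ⟨m, n, rfl⟩
    rcases zsmul_eq_zero_or_self_of_two_nsmul_eq_zero (h2 a) m with ha | ha <;>
      rcases zsmul_eq_zero_or_self_of_two_nsmul_eq_zero (h2 b) n with hb | hb <;> simp [ha, hb]
  · rintro (rfl | rfl | rfl | rfl)
    exacts [⟨0, 0, by simp⟩, ⟨1, 0, by simp⟩, ⟨0, 1, by simp⟩, ⟨1, 1, by simp⟩]

end TwoTorsion

lemma two_nsmul_eq_zero_of_zmod_two {ι : Type*} (x : ι → ZMod 2) : 2 • x = 0 :=
  funext fun j => CharTwo.two_nsmul (x j)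

lemma neg_eq_self_of_zmod_two {ι : Type*} (x : ι → ZMod 2) : -x = x :=
  funext fun j => CharTwo.neg_eq (x j)

lemma paperD_zmod_two {s : ℕ} (α : Fin s → ZMod 2) :
    paperD 2 α = -1 + (#{j | α j ≠ 0} : ℚ) / 2 := by
  have hval : ∀ a : ZMod 2, (((-a).val : ℕ) : ℚ) = if a ≠ 0 then 1 else 0 := by decide
  simp only [paperD, hval, sum_boole]
  ring

lemma paperS_closure_pair_zmod_two {s : ℕ} {a b : Fin s → ZMod 2}
    (ha : a ≠ 0) (hb : b ≠ 0) (hab : a ≠ b) :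
    paperS (AddSubgroup.closure {a, b}) =
      (∑ α ∈ ({a, b, a + b} : Finset _), paperD 2 α * (paperD 2 α + 1)) / 2 := by
  have hsum : a + b ≠ 0 := by
    rwa [Ne, add_eq_zero_iff_eq_neg, neg_eq_self_of_zmod_two]
  have hcarrier : (AddSubgroup.closure {a, b} : Set (Fin s → ZMod 2)).toFinite.toFinset =
      {0, a, b, a + b} := by
    ext α
    simp [AddSubgroup.coe_closure_pair_of_two_nsmul_eq_zero two_nsmul_eq_zero_of_zmod_two]
  rw [paperS, hcarrier, filter_false_of_mem fun α _ h => h (two_nsmul_eq_zero_of_zmod_two α)]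
  have hnonzero : ({0, a, b, a + b} : Finset (Fin s → ZMod 2)).filter
      (fun α => α ≠ 0 ∧ 2 • α = 0) = {a, b, a + b} := by
    ext α
    simp only [mem_filter, mem_insert, mem_singleton, two_nsmul_eq_zero_of_zmod_two, and_true]
    constructor
    · rintro ⟨rfl | h, h0⟩
      exacts [absurd rfl h0, h]
    · rintro (rfl | rfl | rfl) <;> simp_all
  rw [hnonzero, sum_empty]
  ring

/-- Table 1, third genus-3 family: `G = ℤ/2 × ℤ/2`, `N = 2`, monodromy data
`{(1,0),(1,0),(1,1),(1,1),(0,1),(0,1)}` (rows `(1,1,1,1,0,0)` and `(0,0,1,1,1,1)`):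
`S(R) = 3 = s − 3`. -/
theorem table1_genus3_third :
    paperS (AddSubgroup.closure
      {(![1, 1, 1, 1, 0, 0] : Fin 6 → ZMod 2), ![0, 0, 1, 1, 1, 1]}) = 3 := by
  rw [paperS_closure_pair_zmod_two (by decide) (by decide) (by decide),
    sum_congr rfl (g := fun _ => (2 : ℚ)), sum_const, card_insert_of_notMem (by decide),
    card_pair (by decide)]
  · norm_num
  · intro α hα
    have hweight : #{j | α j ≠ 0} = 4 := by
      simp only [mem_insert, mem_singleton] at hα
      rcases hα with rfl | rfl | rfl <;> decide
    rw [paperD_zmod_two, hweight]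
    norm_num
end

section
/- Let p be a prime and let e₂, e₃, e₄ be natural numbers with e_i ≤ p − 1 for each i and e₂ + e₃ + e₄ ≥ p − 1. In the multivariate polynomial ring (ZMod p)[X₂, X₃, X₄], define B := ∑_{j₂+j₃+j₄ = p−1} binom(e₂,j₂)·binom(e₃,j₃)·binom(e₄,j₄) · X₂^{j₂} X₃^{j₃} X₄^{j₄} (binomial coefficients reduced mod p). Then B ≠ 0, and the largest integer r such that X₂^r divides B equals max(0, (p−1) − e₃ − e₄); that is, X₂^{max(0, (p−1)−e₃−e₄)} divides B but X₂^{max(0, (p−1)−e₃−e₄)+1} does not. -/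
open Finset MvPolynomial

private lemma choose_ne_zero_zmod {p : ℕ} [hp : Fact p.Prime] {e j : ℕ} (he : e ≤ p - 1)
    (hj : j ≤ e) : ((e.choose j : ℕ) : ZMod p) ≠ 0 := by
  rw [Ne, ZMod.natCast_eq_zero_iff]
  intro hdvd
  have h1 : e.choose j * (j.factorial * (e - j).factorial) = e.factorial := by
    rw [← Nat.choose_mul_factorial_mul_factorial hj]; ring
  have h2 : p ∣ e.factorial := h1 ▸ hdvd.mul_right _
  rw [Nat.Prime.dvd_factorial hp.out] at h2
  have := hp.out.two_le
  omega

/-- Order of vanishing in `X₂` of the restricted Hasse–Witt polynomial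
`B = ∑_{j₂+j₃+j₄=p−1} binom(e₂,j₂)binom(e₃,j₃)binom(e₄,j₄) X₂^{j₂}X₃^{j₃}X₄^{j₄}`
over `ZMod p` (the variables `X₂, X₃, X₄` are `X 0, X 1, X 2`): `B ≠ 0` and the largest `r`
with `X₂^r ∣ B` is `max(0, (p−1) − e₃ − e₄)` (= `p − 1 − e₃ − e₄` in truncated
natural subtraction). -/
theorem hasseWitt_restricted_vanishing_order (p : ℕ) [Fact p.Prime] (e₂ e₃ e₄ : ℕ)
    (h₂ : e₂ ≤ p - 1) (h₃ : e₃ ≤ p - 1) (h₄ : e₄ ≤ p - 1) (hsum : p - 1 ≤ e₂ + e₃ + e₄) :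
    let B : MvPolynomial (Fin 3) (ZMod p) :=
      ∑ j ∈ Finset.Nat.antidiagonalTuple 3 (p - 1),
        C ((e₂.choose (j 0) * e₃.choose (j 1) * e₄.choose (j 2) : ℕ) : ZMod p) *
          X 0 ^ j 0 * X 1 ^ j 1 * X 2 ^ j 2
    B ≠ 0 ∧ (X 0 : MvPolynomial (Fin 3) (ZMod p)) ^ (p - 1 - e₃ - e₄) ∣ B ∧
      ¬ (X 0 : MvPolynomial (Fin 3) (ZMod p)) ^ (p - 1 - e₃ - e₄ + 1) ∣ B := by
  have hp2 := (Fact.out : p.Prime).two_le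
  set r : ℕ := p - 1 - e₃ - e₄ with hr
  set c : (Fin 3 → ℕ) → ZMod p := fun j =>
    ((e₂.choose (j 0) * e₃.choose (j 1) * e₄.choose (j 2) : ℕ) : ZMod p) with hc
  set Bsum : MvPolynomial (Fin 3) (ZMod p) :=
      ∑ j ∈ Finset.Nat.antidiagonalTuple 3 (p - 1),
        C (c j) * X 0 ^ j 0 * X 1 ^ j 1 * X 2 ^ j 2 with hBsum
  have hterm : ∀ j : Fin 3 → ℕ,
      C (c j) * X 0 ^ j 0 * X 1 ^ j 1 * X 2 ^ j 2
        = monomial (Finsupp.equivFunOnFinite.symm j) (c j) := by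
    intro j
    have h : (Finsupp.equivFunOnFinite.symm j : Fin 3 →₀ ℕ)
        = Finsupp.single 0 (j 0) + Finsupp.single 1 (j 1) + Finsupp.single 2 (j 2) := by
      ext i; fin_cases i <;> simp
    rw [h, C_apply, X_pow_eq_monomial, X_pow_eq_monomial, X_pow_eq_monomial,
        monomial_mul, monomial_mul, monomial_mul]
    simp
  -- witness tuple
  set w : Fin 3 → ℕ := ![r, e₃, p - 1 - r - e₃] with hwdef
  have hw0 : w 0 = r := rfl
  have hw1 : w 1 = e₃ := rfl
  have hw2 : w 2 = p - 1 - r - e₃ := rfl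
  have hw_mem : w ∈ Finset.Nat.antidiagonalTuple 3 (p - 1) := by
    rw [Finset.Nat.mem_antidiagonalTuple]
    rw [Fin.sum_univ_three, hw0, hw1, hw2]
    omega
  have hcw : c w ≠ 0 := by
    rw [hc]
    push_cast
    refine mul_ne_zero (mul_ne_zero ?_ ?_) ?_
    · exact choose_ne_zero_zmod h₂ (by rw [hw0]; omega)
    · exact choose_ne_zero_zmod h₃ (by rw [hw1])
    · exact choose_ne_zero_zmod h₄ (by rw [hw2]; omega)
  have hcoeff : coeff (Finsupp.equivFunOnFinite.symm w) Bsum = c w := by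
    rw [hBsum, coeff_sum, Finset.sum_eq_single w]
    · rw [hterm w, coeff_monomial, if_pos rfl]
    · intro j hj hne
      rw [hterm j, coeff_monomial, if_neg]
      exact fun h => hne (Finsupp.equivFunOnFinite.symm.injective h)
    · exact fun h => absurd hw_mem h
  have hB0 : Bsum ≠ 0 := by
    intro h0
    rw [h0, coeff_zero] at hcoeff
    exact hcw hcoeff.symm
  have hdvd : (X 0 : MvPolynomial (Fin 3) (ZMod p)) ^ r ∣ Bsum := by
    apply Finset.dvd_sum
    intro j hj
    by_cases hle : r ≤ j 0
    · exact (((pow_dvd_pow _ hle).mul_left _).mul_right _).mul_right _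
    · have hsumj : j 0 + j 1 + j 2 = p - 1 := by
        have := Finset.Nat.mem_antidiagonalTuple.mp hj
        simpa [Fin.sum_univ_three] using this
      have hor : e₃ < j 1 ∨ e₄ < j 2 := by omega
      have hz : (e₂.choose (j 0) * e₃.choose (j 1) * e₄.choose (j 2) : ℕ) = 0 := by
        rcases hor with h | h
        · simp [Nat.choose_eq_zero_of_lt h]
        · simp [Nat.choose_eq_zero_of_lt h]
      rw [hc]
      simp only [hz]
      simp
  have hndvd : ¬ (X 0 : MvPolynomial (Fin 3) (ZMod p)) ^ (r + 1) ∣ Bsum := by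
    rintro ⟨Q, hQ⟩
    have hz : coeff (Finsupp.equivFunOnFinite.symm w) Bsum = 0 := by
      rw [hQ, X_pow_eq_monomial, coeff_monomial_mul', if_neg, ]
      rw [Finsupp.single_le_iff]
      have : (Finsupp.equivFunOnFinite.symm w) 0 = r := hw0
      omega
    rw [hcoeff] at hz
    exact hcw hz
  exact ⟨hB0, hdvd, hndvd⟩
end

section
/- Let N ≥ 2 and let R be a finite additive subgroup of (Fin 4 → ZMod N) such that every α ∈ R satisfies ∑_j α_j = 0 in ZMod N. If S(R) > 1, then there exist α, α' ∈ R with α ≠ 0, α' ≠ 0, α' ≠ α and α' ≠ −α, such that d(α) = d(−α) = 1 and d(α') = d(−α') = 1. -/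
open Finset

lemma val_sum_dvd {s N : ℕ} [NeZero N] (α : Fin s → ZMod N) (h : ∑ j, α j = 0) :
    (N : ℕ) ∣ ∑ j, (α j).val := by
  have h2 : ((∑ j, (α j).val : ℕ) : ZMod N) = 0 := by
    push_cast
    simpa [ZMod.natCast_val, ZMod.cast_id] using h
  exact (ZMod.natCast_eq_zero_iff _ _).mp h2

lemma paperD_eq {s N : ℕ} [NeZero N] (α : Fin s → ZMod N) {m : ℕ}
    (h : ∑ j, (-α j).val = N * m) : paperD N α = (m : ℚ) - 1 := by
  have hN : (N:ℚ) ≠ 0 := Nat.cast_ne_zero.mpr (NeZero.ne N)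
  rw [paperD, show ∑ j, (((-α j).val : ℚ)) = ((∑ j, (-α j).val : ℕ) : ℚ) by push_cast; ring,
    h]
  push_cast
  field_simp
  ring

lemma val_neg_add_val_le {N : ℕ} [NeZero N] (x : ZMod N) : (-x).val + x.val ≤ N := by
  rcases eq_or_ne x 0 with h | h
  · simp [h]
  · rw [ZMod.neg_val, if_neg h]
    have := x.val_lt
    omega

lemma exists_m {N : ℕ} [NeZero N] {R : AddSubgroup (Fin 4 → ZMod N)}
    (hsum : ∀ α ∈ R, ∑ j, α j = 0) {α} (hα : α ∈ R) :
    ∃ m : ℕ, ∑ j, (-α j).val = N * m ∧ paperD N α = (m:ℚ) - 1 := by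
  have h := val_sum_dvd (-α) (by simpa using hsum (-α) (neg_mem hα))
  obtain ⟨m, hm⟩ := h
  have hm' : ∑ j, (-α j).val = N * m := by simpa using hm
  exact ⟨m, hm', paperD_eq α hm'⟩

lemma m_pos {N : ℕ} [NeZero N] {α : Fin 4 → ZMod N} (hα : α ≠ 0) {m : ℕ}
    (hm : ∑ j, (-α j).val = N * m) : 1 ≤ m := by
  obtain ⟨j, hj⟩ := Function.ne_iff.mp hα
  have h1 : 1 ≤ (-α j).val := by
    have : -α j ≠ 0 := by simpa using hj
    have := (ZMod.val_eq_zero (-α j)).not.mpr this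
    omega
  have h2 : (-α j).val ≤ ∑ i, (-α i).val :=
    Finset.single_le_sum (f := fun i => (-α i).val) (fun i _ => Nat.zero_le _) (mem_univ j)
  have hN : 0 < N := Nat.pos_of_ne_zero (NeZero.ne N)
  nlinarith [hm]

lemma m_add_le {N : ℕ} [NeZero N] (α : Fin 4 → ZMod N) {m m' : ℕ}
    (hm : ∑ j, (-α j).val = N * m) (hm' : ∑ j, (-(-α) j).val = N * m') :
    m + m' ≤ 4 := by
  have key : ∑ j, (-α j).val + ∑ j, (α j).val ≤ 4 * N := by
    rw [← Finset.sum_add_distrib]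
    calc ∑ j, ((-α j).val + (α j).val) ≤ ∑ _j : Fin 4, N :=
          Finset.sum_le_sum fun j _ => val_neg_add_val_le (α j)
      _ = 4 * N := by simp [Finset.sum_const, Nat.mul_comm]
  have hm'' : ∑ j, (α j).val = N * m' := by simpa using hm'
  have hN : 0 < N := Nat.pos_of_ne_zero (NeZero.ne N)
  nlinarith

lemma ne_zero_of_two_smul_ne_zero {N : ℕ} {α : Fin 4 → ZMod N} (h : 2 • α ≠ 0) : α ≠ 0 := by
  intro h0; rw [h0] at h; simp at h

lemma fact1 {N : ℕ} [NeZero N] {R : AddSubgroup (Fin 4 → ZMod N)}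
    (hsum : ∀ α ∈ R, ∑ j, α j = 0) {α} (hα : α ∈ R) (h2 : 2 • α ≠ 0) :
    paperD N α * paperD N (-α) = 0 ∨ (paperD N α = 1 ∧ paperD N (-α) = 1) := by
  obtain ⟨m, hm, hd⟩ := exists_m hsum hα
  obtain ⟨m', hm', hd'⟩ := exists_m hsum (neg_mem hα)
  have hα0 : α ≠ 0 := ne_zero_of_two_smul_ne_zero h2
  have hα0' : -α ≠ 0 := neg_ne_zero.mpr hα0
  have h1 : 1 ≤ m := m_pos hα0 hm
  have h1' : 1 ≤ m' := m_pos hα0' hm'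
  have hle : m + m' ≤ 4 := m_add_le α hm hm'
  rw [hd, hd']
  have hb : m ≤ 3 := by omega
  have hb' : m' ≤ 3 := by omega
  interval_cases m <;> interval_cases m' <;> first | omega | norm_num

lemma fact2 {N : ℕ} [NeZero N] {R : AddSubgroup (Fin 4 → ZMod N)}
    (hsum : ∀ α ∈ R, ∑ j, α j = 0) {α} (hα : α ∈ R) (h0 : α ≠ 0) (h2 : 2 • α = 0) :
    paperD N α * (paperD N α + 1) = 0 ∨ paperD N α = 1 := by
  obtain ⟨m, hm, hd⟩ := exists_m hsum hα
  obtain ⟨m', hm', hd'⟩ := exists_m hsum (neg_mem hα)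
  have hneg : -α = α := neg_eq_of_add_eq_zero_left (by rwa [two_nsmul] at h2)
  have h1 : 1 ≤ m := m_pos h0 hm
  have hmm : m = m' := by
    have : (m : ℚ) - 1 = (m' : ℚ) - 1 := by rw [← hd, ← hd', hneg]
    exact_mod_cast (by linarith : (m : ℚ) = m')
  have hle : m + m' ≤ 4 := m_add_le α hm hm'
  rw [hd]
  subst hmm
  have hb : m ≤ 2 := by omega
  interval_cases m <;> norm_num

lemma neg_eq_self_of_two_smul_eq_zero {N : ℕ} {α : Fin 4 → ZMod N} (h : 2 • α = 0) :
    -α = α :=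
  neg_eq_of_add_eq_zero_left (by rwa [two_nsmul] at h)

/-- First step of the proof of Theorem 6.1.1: for a family of abelian covers with four
branch points (character data a finite subgroup `R ≤ (Fin 4 → ZMod N)` whose elements sum
to zero), if `S(R) > 1` then there are `α, α' ∈ R` with `α, α' ≠ 0`, `α' ≠ ±α`, and
`d(α) = d(−α) = d(α') = d(−α') = 1`. -/
theorem exists_two_pairs_of_dim_one (N : ℕ) (hN : 2 ≤ N) [NeZero N]
    (R : AddSubgroup (Fin 4 → ZMod N)) (hsum : ∀ α ∈ R, ∑ j, α j = 0)
    (hS : 1 < paperS R) :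
    ∃ α ∈ R, ∃ α' ∈ R, α ≠ 0 ∧ α' ≠ 0 ∧ α' ≠ α ∧ α' ≠ -α ∧
      paperD N α = 1 ∧ paperD N (-α) = 1 ∧ paperD N α' = 1 ∧ paperD N (-α') = 1 := by
  classical
  rw [paperS] at hS
  set T := (R : Set (Fin 4 → ZMod N)).toFinite.toFinset with hT
  have hmem : ∀ β : Fin 4 → ZMod N, β ∈ T ↔ β ∈ R := fun β => Set.Finite.mem_toFinset _
  set F1 := T.filter fun β => 2 • β ≠ 0 with hF1
  set F2 := T.filter fun β => β ≠ 0 ∧ 2 • β = 0 with hF2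
  set P1 := F1.filter (fun β => paperD N β = 1 ∧ paperD N (-β) = 1) with hP1
  set P2 := F2.filter (fun β => paperD N β = 1) with hP2
  -- membership unpacking
  have hP1mem : ∀ β ∈ P1, β ∈ R ∧ 2 • β ≠ 0 ∧ paperD N β = 1 ∧ paperD N (-β) = 1 := by
    intro β hβ
    obtain ⟨hβ1, hβ2⟩ := mem_filter.mp hβ
    obtain ⟨hβ3, hβ4⟩ := mem_filter.mp hβ1
    exact ⟨(hmem β).mp hβ3, hβ4, hβ2⟩
  have hP2mem : ∀ β ∈ P2, β ∈ R ∧ β ≠ 0 ∧ 2 • β = 0 ∧ paperD N β = 1 := by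
    intro β hβ
    obtain ⟨hβ1, hβ2⟩ := mem_filter.mp hβ
    obtain ⟨hβ3, hβ4⟩ := mem_filter.mp hβ1
    exact ⟨(hmem β).mp hβ3, hβ4.1, hβ4.2, hβ2⟩
  -- sum computations
  have hS1 : ∑ β ∈ F1, paperD N β * paperD N (-β) = (P1.card : ℚ) := by
    rw [← Finset.sum_filter_add_sum_filter_not F1
      (fun β => paperD N β = 1 ∧ paperD N (-β) = 1)]
    have A : ∑ β ∈ P1, paperD N β * paperD N (-β) = (P1.card : ℚ) := by
      rw [Finset.sum_congr rfl (g := fun _ => (1:ℚ)) (fun β hβ => by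
        obtain ⟨h1, h2⟩ := (mem_filter.mp hβ).2
        rw [h1, h2]; norm_num)]
      simp
    have B : ∑ β ∈ F1.filter (fun β => ¬(paperD N β = 1 ∧ paperD N (-β) = 1)),
        paperD N β * paperD N (-β) = 0 := by
      refine Finset.sum_eq_zero fun β hβ => ?_
      obtain ⟨hβ1, hβ2⟩ := mem_filter.mp hβ
      obtain ⟨hβ3, hβ4⟩ := mem_filter.mp hβ1
      rcases fact1 hsum ((hmem β).mp hβ3) hβ4 with h | h
      · exact h
      · exact absurd h hβ2
    rw [A, B, add_zero]
  have hS2 : ∑ β ∈ F2, paperD N β * (paperD N β + 1) = 2 * (P2.card : ℚ) := by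
    rw [← Finset.sum_filter_add_sum_filter_not F2 (fun β => paperD N β = 1)]
    have A : ∑ β ∈ P2, paperD N β * (paperD N β + 1) = 2 * (P2.card : ℚ) := by
      rw [Finset.sum_congr rfl (g := fun _ => (2:ℚ)) (fun β hβ => by
        have h1 := (mem_filter.mp hβ).2
        rw [h1]; norm_num)]
      simp [mul_comm]
    have B : ∑ β ∈ F2.filter (fun β => ¬(paperD N β = 1)),
        paperD N β * (paperD N β + 1) = 0 := by
      refine Finset.sum_eq_zero fun β hβ => ?_
      obtain ⟨hβ1, hβ2⟩ := mem_filter.mp hβ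
      obtain ⟨hβ3, hβ4⟩ := mem_filter.mp hβ1
      rcases fact2 hsum ((hmem β).mp hβ3) hβ4.1 hβ4.2 with h | h
      · exact h
      · exact absurd h hβ2
    rw [A, B, add_zero]
  rw [hS1, hS2] at hS
  have hcard : 2 < P1.card + 2 * P2.card := by
    have h : (2 : ℚ) < (P1.card : ℚ) + 2 * (P2.card : ℚ) := by linarith
    exact_mod_cast h
  -- closing helper
  rcases Nat.lt_or_ge P2.card 1 with hc2 | hc2
  · -- P2 empty, P1.card ≥ 3
    have hc1 : 3 ≤ P1.card := by omega
    have hne : P1.Nonempty := Finset.card_pos.mp (by omega)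
    obtain ⟨α, hα⟩ := hne
    have hsd : (P1 \ {α, -α}).Nonempty := by
      rw [← Finset.card_pos]
      have h1 : P1.card ≤ (P1 \ {α, -α}).card + ({α, -α} : Finset _).card :=
        Finset.card_le_card_sdiff_add_card
      have h2 : ({α, -α} : Finset _).card ≤ 2 :=
        (Finset.card_insert_le _ _).trans (by simp)
      omega
    obtain ⟨α', hα'⟩ := hsd
    obtain ⟨hα'1, hα'2⟩ := Finset.mem_sdiff.mp hα'
    obtain ⟨hR, h2s, hd1, hd2⟩ := hP1mem α hα
    obtain ⟨hR', h2s', hd1', hd2'⟩ := hP1mem α' hα'1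
    simp only [Finset.mem_insert, Finset.mem_singleton, not_or] at hα'2
    exact ⟨α, hR, α', hR', ne_zero_of_two_smul_ne_zero h2s,
      ne_zero_of_two_smul_ne_zero h2s', hα'2.1, hα'2.2, hd1, hd2, hd1', hd2'⟩
  · rcases Nat.lt_or_ge P2.card 2 with hc2' | hc2'
    · -- P2.card = 1, P1.card ≥ 1
      have hc1 : 1 ≤ P1.card := by omega
      obtain ⟨α, hα⟩ := Finset.card_pos.mp (by omega : 0 < P1.card)
      obtain ⟨β, hβ⟩ := Finset.card_pos.mp (by omega : 0 < P2.card)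
      obtain ⟨hR, h2s, hd1, hd2⟩ := hP1mem α hα
      obtain ⟨hR', h0', h2s', hd1'⟩ := hP2mem β hβ
      have hnegβ : -β = β := neg_eq_self_of_two_smul_eq_zero h2s'
      refine ⟨α, hR, β, hR', ne_zero_of_two_smul_ne_zero h2s, h0', ?_, ?_,
        hd1, hd2, hd1', by rw [hnegβ]; exact hd1'⟩
      · intro h; rw [h] at h2s'; exact h2s h2s'
      · intro h
        apply h2s
        have : 2 • (-α) = 0 := by rw [← h]; exact h2s'
        rw [smul_neg, neg_eq_zero] at this
        exact this
    · -- P2.card ≥ 2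
      obtain ⟨β, hβ, β', hβ', hne⟩ := Finset.one_lt_card.mp hc2'
      obtain ⟨hR, h0, h2s, hd1⟩ := hP2mem β hβ
      obtain ⟨hR', h0', h2s', hd1'⟩ := hP2mem β' hβ'
      have hnegβ : -β = β := neg_eq_self_of_two_smul_eq_zero h2s
      have hnegβ' : -β' = β' := neg_eq_self_of_two_smul_eq_zero h2s'
      exact ⟨β, hR, β', hR', h0, h0', hne.symm, by rw [hnegβ]; exact hne.symm,
        hd1, by rw [hnegβ]; exact hd1, hd1', by rw [hnegβ']; exact hd1'⟩
end
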